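/- arXiv:1709.05375 — 3 statements merged into one kernel-verified Lean document; each statement's English description precedes it below -/
import Mathlib

section
/- For all u ∈ H²(Ω̂) with Ω̂ = (0,1)²: (i) u and Π̂u coincide at the four corners of Ω̂; and (ii) on each edge of Ω̂, the restriction of Π̂u coincides with the univariate projector Π_{p,h} applied to the restriction of u to that edge; e.g., for the edge Γ̂ = {0} × (0,1), one has (Π̂u)(0,·) = Π_{p,h}(u(0,·)), and analogously for the other three edges. -/
/-!
Testing the orthogonality relation of `Π_{p,h}` against the splines `1` and `x` shows that
`Π_{p,h} u` agrees with `u` at `0` and at `1` (for `x` one uses `∫₀¹ u' = u(1) - u(0)` on both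
sides). Hence the `x`-projection does not change the values of `Π^y u` on the edges `x = 0, 1`,
which gives the corners and these two edges. On the edges `y = 0, 1` the function `Π^y u`
coincides with `u`, so it has the same weak `x`-derivative there, and `Π^x` sees the same data.
-/

open MeasureTheory Set intervalIntegral

noncomputable section

/-- `u ∈ H¹(0,1)` with weak derivative `du`: both are square integrable on `(0,1)` and `u`
is the integral of `du` (so that `u` is the continuous representative on `[0,1]`). -/
def MemH1 (u du : ℝ → ℝ) : Prop :=
  MemLp u 2 (volume.restrict (Ioo (0:ℝ) 1)) ∧
  MemLp du 2 (volume.restrict (Ioo (0:ℝ) 1)) ∧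
  IntervalIntegrable du volume 0 1 ∧
  ∀ x ∈ Icc (0:ℝ) 1, u x = u 0 + ∫ t in (0:ℝ)..x, du t

/-- The spline space `S_{p,h}` with `h = 1/m`: `C^{p-1}` functions on `(0,1)`, continuous
up to the boundary, which restricted to each `((j-1)h, jh]` are polynomials of degree `≤ p`. -/
def IsSpline (p m : ℕ) (v : ℝ → ℝ) : Prop :=
  ContinuousOn v (Icc (0:ℝ) 1) ∧
  ContDiffOn ℝ (p - 1 : ℕ) v (Ioo (0:ℝ) 1) ∧
  ∀ j : ℕ, j < m → ∃ q : Polynomial ℝ, q.natDegree ≤ p ∧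
    ∀ x : ℝ, (j : ℝ) / m < x → x ≤ ((j : ℝ) + 1) / m → v x = q.eval x

/-- `w = Π_{p,h} u`, the orthogonal projection of `u` (with weak derivative `du`) onto the
spline space with respect to the scalar product
`(u,v)_{H¹_D} = ∫₀¹ u' v' + u(0) v(0)`. -/
def IsProj (p m : ℕ) (u du w : ℝ → ℝ) : Prop :=
  IsSpline p m w ∧
  ∀ v : ℝ → ℝ, IsSpline p m v →
    (∫ t in (0:ℝ)..1, (du t - deriv w t) * deriv v t) + (u 0 - w 0) * v 0 = 0


/-- Slice-wise `H²` data for a function `u` on the unit square `Ω̂ = (0,1)²`: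
`ux, uy, uxx, uxy, uyy` are the partial derivatives of `u` (slice-wise weak derivatives). -/
structure H2DataSq (u ux uy uxx uxy uyy : ℝ → ℝ → ℝ) : Prop where
  hx  : ∀ y ∈ Icc (0:ℝ) 1, MemH1 (fun x => u x y) (fun x => ux x y)
  hy  : ∀ x ∈ Icc (0:ℝ) 1, MemH1 (fun y => u x y) (fun y => uy x y)
  hxx : ∀ y ∈ Icc (0:ℝ) 1, MemH1 (fun x => ux x y) (fun x => uxx x y)
  hxy : ∀ x ∈ Icc (0:ℝ) 1, MemH1 (fun y => ux x y) (fun y => uxy x y)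
  hyx : ∀ y ∈ Icc (0:ℝ) 1, MemH1 (fun x => uy x y) (fun x => uxy x y)
  hyy : ∀ x ∈ Icc (0:ℝ) 1, MemH1 (fun y => uy x y) (fun y => uyy x y)

/-- `w = Π̂ u = Π^x_{p,h} Π^y_{p,h} u`, the tensor-product projector applied to `u`
(`uy` is the partial derivative `∂_y u`): first every slice `u(x,·)` is projected by
`Π_{p,h}` (giving `w1`), then every slice `w1(·,y)` is projected by `Π_{p,h}`
(`w1x` is the slice-wise weak `x`-derivative of `w1`). -/
def IsTensorProj (p m : ℕ) (u uy w : ℝ → ℝ → ℝ) : Prop :=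
  ∃ w1 w1x : ℝ → ℝ → ℝ,
    (∀ x ∈ Icc (0:ℝ) 1, IsProj p m (fun y => u x y) (fun y => uy x y) (fun y => w1 x y)) ∧
    (∀ y ∈ Icc (0:ℝ) 1, MemH1 (fun x => w1 x y) (fun x => w1x x y)) ∧
    (∀ y ∈ Icc (0:ℝ) 1, IsProj p m (fun x => w1 x y) (fun x => w1x x y) (fun x => w x y))

section Spline

variable {p m : ℕ} {v : ℝ → ℝ}

lemma isSpline_const (p m : ℕ) (c : ℝ) : IsSpline p m (fun _ => c) :=
  ⟨continuousOn_const, contDiffOn_const, fun _ _ => ⟨Polynomial.C c, by simp, fun x _ _ => by simp⟩⟩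

lemma isSpline_id (m : ℕ) (hp : 1 ≤ p) : IsSpline p m (fun x => x) :=
  ⟨continuousOn_id, contDiffOn_id, fun _ _ =>
    ⟨Polynomial.X, by simpa using hp, fun x _ _ => by simp⟩⟩

lemma Icc_knots_subset_unitInterval {j : ℕ} (hj : j < m) :
    Icc ((j : ℝ) / m) (((j : ℝ) + 1) / m) ⊆ Icc 0 1 := by
  have hm : (0 : ℝ) < m := by exact_mod_cast Nat.zero_lt_of_lt hj
  refine Icc_subset_Icc (by positivity) ?_
  rw [div_le_one hm]
  exact_mod_cast hj

lemma IsSpline.congr (hv : IsSpline p m v) {v' : ℝ → ℝ} (h : EqOn v' v (Icc 0 1)) :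
    IsSpline p m v' := by
  refine ⟨hv.1.congr h, hv.2.1.congr fun x hx => h (Ioo_subset_Icc_self hx), fun j hj => ?_⟩
  obtain ⟨q, hq, hvq⟩ := hv.2.2 j hj
  refine ⟨q, hq, fun x hx₁ hx₂ => ?_⟩
  rw [h (Icc_knots_subset_unitInterval hj ⟨hx₁.le, hx₂⟩)]
  exact hvq x hx₁ hx₂

lemma IsSpline.exists_hasDerivAt_piece (hv : IsSpline p m v) {j : ℕ} (hj : j < m) :
    ∃ q : Polynomial ℝ, ∀ x ∈ Ioo ((j : ℝ) / m) (((j : ℝ) + 1) / m),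
      HasDerivAt v (q.derivative.eval x) x := by
  obtain ⟨q, -, hvq⟩ := hv.2.2 j hj
  refine ⟨q, fun x hx => (q.hasDerivAt x).congr_of_eventuallyEq ?_⟩
  filter_upwards [isOpen_Ioo.mem_nhds hx] with y hy
  exact hvq y hy.1 hy.2.le

lemma IsSpline.intervalIntegrable_deriv_piece (hv : IsSpline p m v) {j : ℕ} (hj : j < m) :
    IntervalIntegrable (deriv v) volume ((j : ℝ) / m) (((j : ℝ) + 1) / m) := by
  obtain ⟨q, hq⟩ := hv.exists_hasDerivAt_piece hj
  have hm : (0 : ℝ) < m := by exact_mod_cast Nat.zero_lt_of_lt hj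
  rw [intervalIntegrable_iff_integrableOn_Ioo_of_le (by gcongr; linarith)]
  exact (q.derivative.continuous.integrableOn_Icc.mono_set Ioo_subset_Icc_self).congr_fun
    (fun x hx => (hq x hx).deriv.symm) measurableSet_Ioo

lemma IsSpline.integral_deriv_piece (hv : IsSpline p m v) {j : ℕ} (hj : j < m) :
    ∫ t in ((j : ℝ) / m)..(((j : ℝ) + 1) / m), deriv v t =
      v (((j : ℝ) + 1) / m) - v ((j : ℝ) / m) := by
  obtain ⟨q, hq⟩ := hv.exists_hasDerivAt_piece hj
  have hm : (0 : ℝ) < m := by exact_mod_cast Nat.zero_lt_of_lt hj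
  exact integral_eq_sub_of_hasDerivAt_of_le (by gcongr; linarith)
    (hv.1.mono (Icc_knots_subset_unitInterval hj))
    (fun x hx => (hq x hx).differentiableAt.hasDerivAt) (hv.intervalIntegrable_deriv_piece hj)

lemma IsSpline.intervalIntegrable_deriv (hv : IsSpline p m v) (hm : 1 ≤ m) :
    IntervalIntegrable (deriv v) volume 0 1 := by
  have hm' : (m : ℝ) ≠ 0 := Nat.cast_ne_zero.2 (by omega)
  have h := IntervalIntegrable.trans_iterate (a := fun j : ℕ => (j : ℝ) / m) (n := m)
    fun j hj => by simpa only [Nat.cast_add_one] using hv.intervalIntegrable_deriv_piece hj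
  simpa only [Nat.cast_zero, zero_div, div_self hm'] using h

lemma IsSpline.integral_deriv (hv : IsSpline p m v) (hm : 1 ≤ m) :
    ∫ t in (0 : ℝ)..1, deriv v t = v 1 - v 0 := by
  have hm' : (m : ℝ) ≠ 0 := Nat.cast_ne_zero.2 (by omega)
  have hsum := sum_integral_adjacent_intervals (a := fun j : ℕ => (j : ℝ) / m) (n := m)
    fun j hj => by simpa only [Nat.cast_add_one] using hv.intervalIntegrable_deriv_piece hj
  have htelescope := Finset.sum_range_sub (fun j : ℕ => v ((j : ℝ) / m)) m
  simp only [Nat.cast_add_one, Nat.cast_zero, zero_div, div_self hm'] at hsum htelescope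
  rw [← hsum, ← htelescope]
  exact Finset.sum_congr rfl fun j hj => hv.integral_deriv_piece (Finset.mem_range.1 hj)

end Spline

section Projection

variable {p m : ℕ} {f g w : ℝ → ℝ}

lemma MemH1.ae_hasDerivAt (hf : MemH1 f g) :
    ∀ᵐ x, x ∈ Ioo (0 : ℝ) 1 → HasDerivAt f (g x) x := by
  filter_upwards [hf.2.2.1.ae_hasDerivAt_integral] with x hx hxI
  have hx' := hx (by rw [uIcc_of_le zero_le_one]; exact Ioo_subset_Icc_self hxI) 0
    left_mem_uIcc
  refine (hx'.const_add (f 0)).congr_of_eventuallyEq ?_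
  filter_upwards [Icc_mem_nhds hxI.1 hxI.2] with y hy
  exact hf.2.2.2 y hy

lemma MemH1.ae_eq_of_eqOn {f' g' : ℝ → ℝ} (hf : MemH1 f g) (hf' : MemH1 f' g')
    (h : EqOn f f' (Icc 0 1)) : ∀ᵐ t, t ∈ Ioo (0 : ℝ) 1 → g t = g' t := by
  filter_upwards [hf.ae_hasDerivAt, hf'.ae_hasDerivAt] with t hg hg' ht
  exact (hg ht).unique <| (hg' ht).congr_of_eventuallyEq <|
    Filter.eventuallyEq_of_mem (Icc_mem_nhds ht.1 ht.2) h

lemma IsProj.apply_zero (h : IsProj p m f g w) : w 0 = f 0 := by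
  have h1 := h.2 _ (isSpline_const p m 1)
  simp only [deriv_const', mul_zero, intervalIntegral.integral_zero, zero_add, mul_one] at h1
  linarith

lemma IsProj.apply_one (hp : 1 ≤ p) (hm : 1 ≤ m) (h : IsProj p m f g w) (hf : MemH1 f g) :
    w 1 = f 1 := by
  have hx := h.2 _ (isSpline_id m hp)
  simp only [deriv_id'', mul_one, mul_zero, add_zero] at hx
  rw [integral_sub hf.2.2.1 (h.1.intervalIntegrable_deriv hm), h.1.integral_deriv hm] at hx
  have hf1 := hf.2.2.2 1 (right_mem_Icc.2 zero_le_one)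
  linarith [h.apply_zero]

lemma IsProj.congr (h : IsProj p m f g w) {f' g' w' : ℝ → ℝ} (hf : f' 0 = f 0)
    (hg : ∀ᵐ t, t ∈ Ioo (0 : ℝ) 1 → g' t = g t) (hw : EqOn w' w (Icc 0 1)) :
    IsProj p m f' g' w' := by
  refine ⟨h.1.congr hw, fun v hv => ?_⟩
  have hint : ∫ t in (0 : ℝ)..1, (g' t - deriv w' t) * deriv v t =
      ∫ t in (0 : ℝ)..1, (g t - deriv w t) * deriv v t := by
    simp only [integral_of_le zero_le_one, integral_Ioc_eq_integral_Ioo]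
    refine setIntegral_congr_ae measurableSet_Ioo ?_
    filter_upwards [hg] with t hgt ht
    rw [hgt ht, (Filter.eventuallyEq_of_mem (Icc_mem_nhds ht.1 ht.2) hw).deriv_eq]
  rw [hint, hf, hw (left_mem_Icc.2 zero_le_one)]
  exact h.2 v hv

end Projection

/-- Theorem 3 of the paper.  For all `u ∈ H²((0,1)²)`:
(i) `u` and `Π̂ u` coincide at the four corners of the unit square, and
(ii) on each of the four edges, the restriction of `Π̂ u` is the univariate projection
`Π_{p,h}` of the corresponding restriction of `u` (expressed by the `IsProj` predicate, which
characterizes `Π_{p,h}` via `H¹_D`-orthogonality). -/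
theorem statement6 (p m : ℕ) (hp : 1 ≤ p) (hm : 1 ≤ m)
    (u ux uy uxx uxy uyy : ℝ → ℝ → ℝ)
    (hu : H2DataSq u ux uy uxx uxy uyy)
    (w : ℝ → ℝ → ℝ) (hw : IsTensorProj p m u uy w) :
    (w 0 0 = u 0 0 ∧ w 1 0 = u 1 0 ∧ w 0 1 = u 0 1 ∧ w 1 1 = u 1 1) ∧
    IsProj p m (fun y => u 0 y) (fun y => uy 0 y) (fun y => w 0 y) ∧
    IsProj p m (fun y => u 1 y) (fun y => uy 1 y) (fun y => w 1 y) ∧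
    IsProj p m (fun x => u x 0) (fun x => ux x 0) (fun x => w x 0) ∧
    IsProj p m (fun x => u x 1) (fun x => ux x 1) (fun x => w x 1) := by
  obtain ⟨w₁, w₁x, hw₁, hw₁H1, hww₁⟩ := hw
  have h0 : (0 : ℝ) ∈ Icc (0 : ℝ) 1 := left_mem_Icc.2 zero_le_one
  have h1 : (1 : ℝ) ∈ Icc (0 : ℝ) 1 := right_mem_Icc.2 zero_le_one
  have hw_left : EqOn (fun y => w 0 y) (fun y => w₁ 0 y) (Icc 0 1) :=
    fun y hy => (hww₁ y hy).apply_zero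
  have hw_right : EqOn (fun y => w 1 y) (fun y => w₁ 1 y) (Icc 0 1) :=
    fun y hy => (hww₁ y hy).apply_one hp hm (hw₁H1 y hy)
  have hw₁_bottom : EqOn (fun x => u x 0) (fun x => w₁ x 0) (Icc 0 1) :=
    fun x hx => (hw₁ x hx).apply_zero.symm
  have hw₁_top : EqOn (fun x => u x 1) (fun x => w₁ x 1) (Icc 0 1) :=
    fun x hx => ((hw₁ x hx).apply_one hp hm (hu.hy x hx)).symm
  refine ⟨⟨(hw_left h0).trans (hw₁_bottom h0).symm, (hw_right h0).trans (hw₁_bottom h1).symm,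
    (hw_left h1).trans (hw₁_top h0).symm, (hw_right h1).trans (hw₁_top h1).symm⟩, ?_, ?_, ?_, ?_⟩
  · exact (hw₁ 0 h0).congr rfl (ae_of_all _ fun _ _ => rfl) hw_left
  · exact (hw₁ 1 h1).congr rfl (ae_of_all _ fun _ _ => rfl) hw_right
  · exact (hww₁ 0 h0).congr (hw₁_bottom h0) ((hu.hx 0 h0).ae_eq_of_eqOn (hw₁H1 0 h0) hw₁_bottom)
      fun _ _ => rfl
  · exact (hww₁ 1 h1).congr (hw₁_top h0) ((hu.hx 1 h1).ae_eq_of_eqOn (hw₁H1 1 h1) hw₁_top)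
      fun _ _ => rfl
end
end

section
/- Let A, M, L be symmetric positive definite N×N real matrices, let h > 0, and let P be an N×N_H real matrix of full column rank with coarse-grid matrix A_H := Pᵀ A P. Let Π_H denote the A-orthogonal projection onto the range of P, and let c_A > 0 be such that ‖(I − Π_H)u‖²_M ≤ 4 c_A² h² ‖u‖²_A for all u ∈ ℝᴺ (approximation property). Assume c̲ A ≤ L ≤ c̄ (A + h⁻² M) for constants c̲, c̄ > 0 (in the sense of quadratic forms). Then for every τ ∈ (0, c̲] and every integer ν > ν₀ := τ⁻¹ c̄ (1 + 4 c_A²), the two-grid error propagation matrix E := (I − P A_H⁻¹ Pᵀ A)(I − τ L⁻¹ A)^ν satisfies ‖E u‖_{A + h⁻²M} ≤ (ν₀/ν) ‖u‖_{A + h⁻²M} for all u ∈ ℝᴺ. Equivalently, the two-grid method consisting of ν smoothing steps u ↦ u + τ L⁻¹(f − A u) followed by exact coarse-grid correction converges with rate q = ν₀/ν in the norm induced by A + h⁻²M. -/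
/-!
Put `X = A + h⁻² M`, `K = 1 + 4 c_A²`, `κ = τ⁻¹ c̄`, `S = I - τ L⁻¹ A`, and let `e = (I - Π_H) v` be
the coarse-grid correction of the smoothed error `v = S^ν u`. Since `I - Π_H` is an `A`-orthogonal
projection, `‖e‖²_A = (e, A v)`, so the approximation property `‖e‖²_X ≤ K ‖e‖²_A` and
Cauchy–Schwarz give `‖e‖_X ≤ K ‖A v‖_{X⁻¹}`. As `τ⁻¹ L ≤ κ X`, inverting gives
`‖A v‖²_{X⁻¹} ≤ κ ‖A v‖²_{(τ⁻¹ L)⁻¹}`. For the smoother, let `R = (τ⁻¹ L)^{1/2}` and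
`T = R⁻¹ A R⁻¹`; then `0 ≤ T ≤ 1` because `τ A ≤ L`, and `A S^ν = R T (1 - T)^ν R`. The scalar
bound `ν t (1 - t)^ν ≤ 1` on `[0, 1]` (Bernoulli applied to `(1 + t)^ν (1 - t)^ν ≤ 1`) then yields
`ν² ‖A v‖²_{(τ⁻¹ L)⁻¹} ≤ ‖u‖²_{τ⁻¹ L} ≤ κ ‖u‖²_X`.
-/

open Matrix

noncomputable section

/-- `B₁ ≤ B₂` in the sense of quadratic forms: `uᵀ B₁ u ≤ uᵀ B₂ u` for all `u`. -/
def QLE {n : ℕ} (B₁ B₂ : Matrix (Fin n) (Fin n) ℝ) : Prop :=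
  ∀ u : Fin n → ℝ, u ⬝ᵥ B₁.mulVec u ≤ u ⬝ᵥ B₂.mulVec u

/-- The norm `‖u‖_B = (uᵀ B u)^{1/2}` induced by a (positive definite) matrix `B`. -/
def matNorm {n : ℕ} (B : Matrix (Fin n) (Fin n) ℝ) (u : Fin n → ℝ) : ℝ :=
  Real.sqrt (u ⬝ᵥ B.mulVec u)

open scoped MatrixOrder

lemma natCast_mul_mul_one_sub_pow_le_one {t : ℝ} (ht0 : 0 ≤ t) (ht1 : t ≤ 1) (ν : ℕ) :
    ν * (t * (1 - t) ^ ν) ≤ 1 := by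
  have h1 : 1 + ν * t ≤ (1 + t) ^ ν := one_add_mul_le_pow (by linarith) ν
  have h2 : ((1 + t) * (1 - t)) ^ ν ≤ 1 := pow_le_one₀ (by nlinarith) (by nlinarith)
  have h3 : 0 ≤ (1 - t) ^ ν := pow_nonneg (by linarith) ν
  rw [mul_pow] at h2
  nlinarith [mul_le_mul_of_nonneg_right h1 h3]

namespace Matrix

variable {n : Type*} [Fintype n]

lemma IsHermitian.dotProduct_mulVec_comm {B : Matrix n n ℝ} (hB : B.IsHermitian) (x y : n → ℝ) :
    x ⬝ᵥ B *ᵥ y = y ⬝ᵥ B *ᵥ x := by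
  rw [dotProduct_mulVec, ← mulVec_transpose, ← conjTranspose_eq_transpose_of_trivial, hB.eq,
    dotProduct_comm]

lemma le_iff_forall_dotProduct_mulVec_le {B C : Matrix n n ℝ} (hB : B.IsHermitian)
    (hC : C.IsHermitian) : B ≤ C ↔ ∀ x, x ⬝ᵥ B *ᵥ x ≤ x ⬝ᵥ C *ᵥ x := by
  simp only [le_iff, posSemidef_iff_dotProduct_mulVec, hC.sub hB, true_and, star_trivial,
    sub_mulVec, dotProduct_sub, sub_nonneg]

lemma PosSemidef.sq_dotProduct_mulVec_le {B : Matrix n n ℝ} (hB : B.PosSemidef) (x y : n → ℝ) :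
    (x ⬝ᵥ B *ᵥ y) ^ 2 ≤ (x ⬝ᵥ B *ᵥ x) * (y ⬝ᵥ B *ᵥ y) := by
  have hquad : ∀ t : ℝ, 0 ≤ (y ⬝ᵥ B *ᵥ y) * (t * t) + 2 * (x ⬝ᵥ B *ᵥ y) * t + x ⬝ᵥ B *ᵥ x := by
    intro t
    have h := hB.dotProduct_mulVec_nonneg (x + t • y)
    simp only [star_trivial, mulVec_add, mulVec_smul, dotProduct_add, add_dotProduct,
      smul_dotProduct, dotProduct_smul, smul_eq_mul] at h
    rw [hB.isHermitian.dotProduct_mulVec_comm y x] at h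
    linarith
  have := discrim_le_zero hquad
  rw [discrim] at this
  linarith

section DecidableEq

variable [DecidableEq n]

lemma PosDef.mulVec_inv_mulVec {X : Matrix n n ℝ} (hX : X.PosDef) (y : n → ℝ) :
    X *ᵥ (X⁻¹ *ᵥ y) = y := by
  rw [mulVec_mulVec, mul_nonsing_inv _ hX.det_pos.ne'.isUnit, one_mulVec]

lemma PosDef.sq_dotProduct_le_mul_inv {X : Matrix n n ℝ} (hX : X.PosDef) (x y : n → ℝ) :
    (x ⬝ᵥ y) ^ 2 ≤ (x ⬝ᵥ X *ᵥ x) * (y ⬝ᵥ X⁻¹ *ᵥ y) := by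
  have h := hX.posSemidef.sq_dotProduct_mulVec_le x (X⁻¹ *ᵥ y)
  rwa [hX.mulVec_inv_mulVec, dotProduct_comm (X⁻¹ *ᵥ y)] at h

lemma PosDef.dotProduct_mulVec_le_sq_mul_inv {X : Matrix n n ℝ} (hX : X.PosDef) {K : ℝ}
    (hK : 0 ≤ K) {x y : n → ℝ} (h : x ⬝ᵥ X *ᵥ x ≤ K * (x ⬝ᵥ y)) :
    x ⬝ᵥ X *ᵥ x ≤ K ^ 2 * (y ⬝ᵥ X⁻¹ *ᵥ y) := by
  have hcs := hX.sq_dotProduct_le_mul_inv x y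
  have hx0 : 0 ≤ x ⬝ᵥ X *ᵥ x := by simpa using hX.posSemidef.dotProduct_mulVec_nonneg x
  have hy0 : 0 ≤ y ⬝ᵥ X⁻¹ *ᵥ y := by simpa using hX.inv.posSemidef.dotProduct_mulVec_nonneg y
  rcases hx0.eq_or_lt with hx | hx
  · rw [← hx]; positivity
  · have hxy : 0 ≤ x ⬝ᵥ y := by nlinarith
    nlinarith [mul_le_mul h h hx0 (by positivity)]

lemma PosDef.inv_anti {B C : Matrix n n ℝ} (hB : B.PosDef) (hC : C.PosDef) (hBC : B ≤ C) :
    C⁻¹ ≤ B⁻¹ := by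
  rw [le_iff_forall_dotProduct_mulVec_le hB.isHermitian hC.isHermitian] at hBC
  rw [le_iff_forall_dotProduct_mulVec_le hC.inv.isHermitian hB.inv.isHermitian]
  intro y
  set x := C⁻¹ *ᵥ y
  set z := B⁻¹ *ᵥ y
  have hCx : C *ᵥ x = y := hC.mulVec_inv_mulVec y
  have hBz : B *ᵥ z = y := hB.mulVec_inv_mulVec y
  have h := hB.posSemidef.dotProduct_mulVec_nonneg (x - z)
  simp only [star_trivial, mulVec_sub, dotProduct_sub, sub_dotProduct, hBz,
    hB.isHermitian.dotProduct_mulVec_comm z x] at h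
  have := hBC x
  rw [hCx] at this
  simp only [dotProduct_comm y] at *
  linarith

lemma inv_smul_of_isUnit_det {B : Matrix n n ℝ} (hB : IsUnit B.det) {c : ℝ} (hc : c ≠ 0) :
    (c • B)⁻¹ = c⁻¹ • B⁻¹ :=
  inv_eq_left_inv (by rw [smul_mul_smul_comm, inv_mul_cancel₀ hc, one_smul, nonsing_inv_mul _ hB])

lemma sq_natCast_smul_mul_one_sub_pow_le_one {T : Matrix n n ℝ} (hT0 : 0 ≤ T) (hT1 : T ≤ 1)
    (ν : ℕ) : ((ν : ℝ) • (T * (1 - T) ^ ν)) ^ 2 ≤ 1 := by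
  have hT : IsSelfAdjoint T := IsSelfAdjoint.of_nonneg hT0
  have hcfc : cfc (fun t : ℝ => (ν * (t * (1 - t) ^ ν)) ^ 2) T
      = ((ν : ℝ) • (T * (1 - T) ^ ν)) ^ 2 := by
    rw [cfc_pow _ _ T, cfc_const_mul .., cfc_mul _ _ T, cfc_pow _ _ T, cfc_sub .., cfc_const_one ..,
      cfc_id' ..]
  rw [← hcfc]
  refine cfc_le_one _ _ fun t ht => ?_
  have ht0 : 0 ≤ t := spectrum_nonneg_of_nonneg hT0 ht
  have ht1 : t ≤ 1 := (le_algebraMap_iff_spectrum_le (r := (1 : ℝ))).mp (by simpa using hT1) t ht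
  have hbound := natCast_mul_mul_one_sub_pow_le_one ht0 ht1 ν
  have hnonneg : 0 ≤ ν * (t * (1 - t) ^ ν) := by
    have := pow_nonneg (sub_nonneg.mpr ht1) ν
    positivity
  nlinarith

lemma IsHermitian.dotProduct_mulVec_self_le_of_sq_le_one {B : Matrix n n ℝ} (hB : B.IsHermitian)
    (hB1 : B ^ 2 ≤ 1) (w : n → ℝ) : B *ᵥ w ⬝ᵥ B *ᵥ w ≤ w ⬝ᵥ w := by
  rw [le_iff_forall_dotProduct_mulVec_le (hB.pow 2) isHermitian_one] at hB1
  simpa [sq, ← mulVec_mulVec, hB.dotProduct_mulVec_comm w, dotProduct_comm w] using hB1 w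

lemma natCast_sq_mul_dotProduct_mul_one_sub_pow_mulVec_le {T : Matrix n n ℝ} (hT0 : 0 ≤ T)
    (hT1 : T ≤ 1) (ν : ℕ) (w : n → ℝ) :
    ν ^ 2 * ((T * (1 - T) ^ ν) *ᵥ w ⬝ᵥ (T * (1 - T) ^ ν) *ᵥ w) ≤ w ⬝ᵥ w := by
  have hT : T.IsHermitian := (nonneg_iff_posSemidef.mp hT0).isHermitian
  have hG : ((ν : ℝ) • (T * (1 - T) ^ ν)).IsHermitian := by
    refine IsHermitian.smul ?_ (IsSelfAdjoint.natCast ν)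
    exact (hT.commute_iff ((isHermitian_one.sub hT).pow ν)).mp
      (((Commute.one_right T).sub_right (Commute.refl T)).pow_right ν)
  have := hG.dotProduct_mulVec_self_le_of_sq_le_one
    (sq_natCast_smul_mul_one_sub_pow_le_one hT0 hT1 ν) w
  simpa [smul_mulVec, sq, mul_assoc] using this

lemma mul_one_sub_inv_mul_pow_eq {A R : Matrix n n ℝ} (hR : IsUnit R.det) (ν : ℕ) :
    A * (1 - (R * R)⁻¹ * A) ^ ν =
      R * (R⁻¹ * A * R⁻¹ * (1 - R⁻¹ * A * R⁻¹) ^ ν) * R := by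
  have hRi : R⁻¹ * R = 1 := nonsing_inv_mul _ hR
  have hRi' : R * R⁻¹ = 1 := mul_nonsing_inv _ hR
  have hA : A = R * (R⁻¹ * A * R⁻¹) * R := by
    rw [show R * (R⁻¹ * A * R⁻¹) * R = R * R⁻¹ * A * (R⁻¹ * R) by simp only [Matrix.mul_assoc],
      hRi', hRi, Matrix.one_mul, Matrix.mul_one]
  have hsemi : SemiconjBy R (1 - (R * R)⁻¹ * A) (1 - R⁻¹ * A * R⁻¹) := by
    simp only [SemiconjBy, Matrix.mul_sub, Matrix.sub_mul, Matrix.mul_one, Matrix.one_mul,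
      Matrix.mul_inv_rev, Matrix.mul_assoc, hRi, ← Matrix.mul_assoc R R⁻¹, hRi']
  calc A * (1 - (R * R)⁻¹ * A) ^ ν
      = R * (R⁻¹ * A * R⁻¹) * (R * (1 - (R * R)⁻¹ * A) ^ ν) := by
        nth_rw 1 [hA]
        simp only [Matrix.mul_assoc]
    _ = R * (R⁻¹ * A * R⁻¹ * (1 - R⁻¹ * A * R⁻¹) ^ ν) * R := by
        rw [(hsemi.pow_right ν).eq]
        simp only [Matrix.mul_assoc]

lemma natCast_sq_mul_dotProduct_smoother_le {A L : Matrix n n ℝ} (hA : A.PosSemidef)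
    (hL : L.PosDef) (hAL : A ≤ L) (ν : ℕ) (u : n → ℝ) :
    ν ^ 2 * ((A * (1 - L⁻¹ * A) ^ ν) *ᵥ u ⬝ᵥ L⁻¹ *ᵥ ((A * (1 - L⁻¹ * A) ^ ν) *ᵥ u)) ≤
      u ⬝ᵥ L *ᵥ u := by
  set R := CFC.sqrt L
  have hR : R.IsHermitian := (nonneg_iff_posSemidef.mp (CFC.sqrt_nonneg L)).isHermitian
  have hRR : R * R = L := CFC.sqrt_mul_sqrt_self L hL.posSemidef.nonneg
  have hRdet : IsUnit R.det := by
    refine isUnit_iff_ne_zero.mpr fun h => hL.det_pos.ne' ?_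
    rw [← hRR, det_mul, h, zero_mul]
  have hRiH : R⁻¹ᴴ = R⁻¹ := hR.inv.eq
  have hT0 : 0 ≤ R⁻¹ * A * R⁻¹ := by
    simpa only [hRiH] using nonneg_iff_posSemidef.mpr (hA.conjTranspose_mul_mul_same R⁻¹)
  have hT1 : R⁻¹ * A * R⁻¹ ≤ 1 := by
    have h := (le_iff.mp hAL).conjTranspose_mul_mul_same R⁻¹
    rwa [hRiH, Matrix.mul_sub, Matrix.sub_mul, ← hRR, ← Matrix.mul_assoc,
      nonsing_inv_mul _ hRdet, Matrix.one_mul, mul_nonsing_inv _ hRdet] at h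
  have hRdot : ∀ x y, R *ᵥ x ⬝ᵥ y = x ⬝ᵥ R *ᵥ y := fun x y => by
    rw [dotProduct_comm, hR.dotProduct_mulVec_comm]
  have hcancel : R * (R * R)⁻¹ * R = 1 := by
    rw [Matrix.mul_inv_rev, ← Matrix.mul_assoc, mul_nonsing_inv _ hRdet, Matrix.one_mul,
      nonsing_inv_mul _ hRdet]
  have hRz : ∀ z, R *ᵥ z ⬝ᵥ (R * R)⁻¹ *ᵥ (R *ᵥ z) = z ⬝ᵥ z := fun z => by
    rw [hRdot, mulVec_mulVec, mulVec_mulVec, hcancel, one_mulVec]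
  have hLu : u ⬝ᵥ (R * R) *ᵥ u = R *ᵥ u ⬝ᵥ R *ᵥ u := by rw [hRdot, mulVec_mulVec]
  rw [← hRR, mul_one_sub_inv_mul_pow_eq hRdet, ← mulVec_mulVec, ← mulVec_mulVec, hRz, hLu]
  exact natCast_sq_mul_dotProduct_mul_one_sub_pow_mulVec_le hT0 hT1 ν _

lemma natCast_sq_mul_dotProduct_dampedSmoother_le {A L X : Matrix n n ℝ} (hA : A.PosSemidef)
    (hL : L.PosDef) (hX : X.PosDef) {τ c : ℝ} (hτ : 0 < τ) (hc : 0 < c) (hAL : τ • A ≤ L)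
    (hLX : L ≤ c • X) (ν : ℕ) (u : n → ℝ) :
    ν ^ 2 * ((A * (1 - τ • (L⁻¹ * A)) ^ ν) *ᵥ u ⬝ᵥ X⁻¹ *ᵥ ((A * (1 - τ • (L⁻¹ * A)) ^ ν) *ᵥ u))
      ≤ (τ⁻¹ * c) ^ 2 * (u ⬝ᵥ X *ᵥ u) := by
  set κ := τ⁻¹ * c
  have hκ : 0 < κ := by positivity
  have hLτ : (τ⁻¹ • L).PosDef := hL.smul (inv_pos.mpr hτ)
  have hALτ : A ≤ τ⁻¹ • L := by
    have h := (le_iff.mp hAL).smul (inv_nonneg.mpr hτ.le)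
    rwa [smul_sub, inv_smul_smul₀ hτ.ne'] at h
  have hLτX : τ⁻¹ • L ≤ κ • X := by
    have h := (le_iff.mp hLX).smul (inv_nonneg.mpr hτ.le)
    rwa [smul_sub, smul_smul] at h
  rw [show τ • (L⁻¹ * A) = (τ⁻¹ • L)⁻¹ * A by
    rw [inv_smul_of_isUnit_det hL.det_pos.ne'.isUnit (inv_ne_zero hτ.ne'), inv_inv,
      smul_mul_assoc]]
  set y := (A * (1 - (τ⁻¹ • L)⁻¹ * A) ^ ν) *ᵥ u
  have hy : y ⬝ᵥ X⁻¹ *ᵥ y ≤ κ * (y ⬝ᵥ (τ⁻¹ • L)⁻¹ *ᵥ y) := by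
    have h := (le_iff_forall_dotProduct_mulVec_le (hX.smul hκ).inv.isHermitian
      hLτ.inv.isHermitian).mp (hLτ.inv_anti (hX.smul hκ) hLτX) y
    rwa [inv_smul_of_isUnit_det hX.det_pos.ne'.isUnit hκ.ne', smul_mulVec, dotProduct_smul,
      smul_eq_mul, inv_mul_le_iff₀ hκ] at h
  have hu : u ⬝ᵥ (τ⁻¹ • L) *ᵥ u ≤ κ * (u ⬝ᵥ X *ᵥ u) := by
    simpa only [smul_mulVec, dotProduct_smul, smul_eq_mul] using
      (le_iff_forall_dotProduct_mulVec_le hLτ.isHermitian (hX.smul hκ).isHermitian).mp hLτX u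
  calc ν ^ 2 * (y ⬝ᵥ X⁻¹ *ᵥ y) ≤ κ * (ν ^ 2 * (y ⬝ᵥ (τ⁻¹ • L)⁻¹ *ᵥ y)) := by
        rw [mul_left_comm]
        exact mul_le_mul_of_nonneg_left hy (by positivity)
    _ ≤ κ * (κ * (u ⬝ᵥ X *ᵥ u)) := mul_le_mul_of_nonneg_left
        ((natCast_sq_mul_dotProduct_smoother_le hA hLτ hALτ ν u).trans hu) hκ.le
    _ = κ ^ 2 * (u ⬝ᵥ X *ᵥ u) := by ring

end DecidableEq

end Matrix

section CoarseGrid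

variable {n m : Type*} [Fintype n] [Fintype m] [DecidableEq n] [DecidableEq m]

def coarseGridCorrection (P : Matrix n m ℝ) (A : Matrix n n ℝ) : Matrix n n ℝ :=
  1 - P * (Pᵀ * A * P)⁻¹ * Pᵀ * A

variable {P : Matrix n m ℝ} {A : Matrix n n ℝ}

lemma coarseGridCorrection_mul_self (hAH : IsUnit (Pᵀ * A * P).det) :
    coarseGridCorrection P A * coarseGridCorrection P A = coarseGridCorrection P A := by
  have hproj : P * (Pᵀ * A * P)⁻¹ * Pᵀ * A * (P * (Pᵀ * A * P)⁻¹ * Pᵀ * A) =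
      P * (Pᵀ * A * P)⁻¹ * Pᵀ * A := by
    rw [show P * (Pᵀ * A * P)⁻¹ * Pᵀ * A * (P * (Pᵀ * A * P)⁻¹ * Pᵀ * A) =
        P * ((Pᵀ * A * P)⁻¹ * (Pᵀ * A * P)) * ((Pᵀ * A * P)⁻¹ * Pᵀ * A) by
      simp only [Matrix.mul_assoc], nonsing_inv_mul _ hAH, Matrix.mul_one]
    simp only [Matrix.mul_assoc]
  simp only [coarseGridCorrection, Matrix.sub_mul, Matrix.mul_sub, Matrix.one_mul, Matrix.mul_one,
    hproj, sub_self, sub_zero]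

lemma transpose_coarseGridCorrection_mul (hA : A.IsHermitian) :
    (coarseGridCorrection P A)ᵀ * A = A * coarseGridCorrection P A := by
  have hAt : Aᵀ = A := by rw [← conjTranspose_eq_transpose_of_trivial, hA.eq]
  have hAHt : (Pᵀ * A * P)⁻¹ᵀ = (Pᵀ * A * P)⁻¹ := by
    rw [transpose_nonsing_inv, transpose_mul, transpose_mul, hAt, transpose_transpose,
      Matrix.mul_assoc]
  simp only [coarseGridCorrection, transpose_sub, transpose_one, transpose_mul, hAt, hAHt,
    transpose_transpose, Matrix.sub_mul, Matrix.mul_sub, Matrix.one_mul, Matrix.mul_one]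
  simp only [Matrix.mul_assoc]

lemma dotProduct_mulVec_coarseGridCorrection (hA : A.IsHermitian) (hAH : IsUnit (Pᵀ * A * P).det)
    (v : n → ℝ) :
    coarseGridCorrection P A *ᵥ v ⬝ᵥ A *ᵥ (coarseGridCorrection P A *ᵥ v) =
      coarseGridCorrection P A *ᵥ v ⬝ᵥ A *ᵥ v := by
  have hmove : ∀ w, coarseGridCorrection P A *ᵥ v ⬝ᵥ w = v ⬝ᵥ (coarseGridCorrection P A)ᵀ *ᵥ w :=
    fun w => by rw [dotProduct_mulVec, vecMul_transpose]
  rw [hmove, hmove, mulVec_mulVec, mulVec_mulVec, mulVec_mulVec,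
    transpose_coarseGridCorrection_mul hA, Matrix.mul_assoc, coarseGridCorrection_mul_self hAH]

lemma dotProduct_mulVec_coarseGridCorrection_le {M : Matrix n n ℝ} (hA : A.PosDef)
    (hM : M.PosSemidef) (hP : Function.Injective P.mulVec) {c h : ℝ} (hc : 0 ≤ c)
    (happrox : ∀ w, coarseGridCorrection P A *ᵥ w ⬝ᵥ M *ᵥ (coarseGridCorrection P A *ᵥ w) ≤
      c * h ^ 2 * (w ⬝ᵥ A *ᵥ w)) (v : n → ℝ) :
    coarseGridCorrection P A *ᵥ v ⬝ᵥ (A + h⁻¹ ^ 2 • M) *ᵥ (coarseGridCorrection P A *ᵥ v) ≤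
      (1 + c) ^ 2 * (A *ᵥ v ⬝ᵥ (A + h⁻¹ ^ 2 • M)⁻¹ *ᵥ (A *ᵥ v)) := by
  have hAH : IsUnit (Pᵀ * A * P).det := by
    have h := hA.conjTranspose_mul_mul_same hP
    rw [conjTranspose_eq_transpose_of_trivial] at h
    exact h.det_pos.ne'.isUnit
  set e := coarseGridCorrection P A *ᵥ v
  have hAe : 0 ≤ e ⬝ᵥ A *ᵥ e := by simpa using hA.posSemidef.dotProduct_mulVec_nonneg e
  have hMe : e ⬝ᵥ M *ᵥ e ≤ c * h ^ 2 * (e ⬝ᵥ A *ᵥ e) := by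
    have hQe : coarseGridCorrection P A *ᵥ e = e := by
      rw [mulVec_mulVec, coarseGridCorrection_mul_self hAH]
    simpa only [hQe] using happrox e
  have hscaled : h⁻¹ ^ 2 * (e ⬝ᵥ M *ᵥ e) ≤ c * (e ⬝ᵥ A *ᵥ e) :=
    calc h⁻¹ ^ 2 * (e ⬝ᵥ M *ᵥ e) ≤ h⁻¹ ^ 2 * (c * h ^ 2 * (e ⬝ᵥ A *ᵥ e)) :=
          mul_le_mul_of_nonneg_left hMe (by positivity)
      _ = c * (e ⬝ᵥ A *ᵥ e) * ((h ^ 2)⁻¹ * h ^ 2) := by rw [inv_pow]; ring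
      _ ≤ c * (e ⬝ᵥ A *ᵥ e) := mul_le_of_le_one_right (by positivity) inv_mul_le_one
  refine (hA.add_posSemidef (hM.smul (sq_nonneg _))).dotProduct_mulVec_le_sq_mul_inv
    (by positivity) ?_
  rw [← dotProduct_mulVec_coarseGridCorrection hA.isHermitian hAH]
  simp only [add_mulVec, smul_mulVec, dotProduct_add, dotProduct_smul, smul_eq_mul]
  linarith

lemma natCast_sq_mul_dotProduct_twoGrid_le {M L : Matrix n n ℝ} (hA : A.PosDef)
    (hM : M.PosSemidef) (hL : L.PosDef) (hP : Function.Injective P.mulVec) {c h τ chi : ℝ}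
    (hc : 0 ≤ c)
    (happrox : ∀ w, coarseGridCorrection P A *ᵥ w ⬝ᵥ M *ᵥ (coarseGridCorrection P A *ᵥ w) ≤
      c * h ^ 2 * (w ⬝ᵥ A *ᵥ w))
    (hτ : 0 < τ) (hchi : 0 < chi) (hτA : τ • A ≤ L) (hLX : L ≤ chi • (A + h⁻¹ ^ 2 • M)) (ν : ℕ)
    (u : n → ℝ) :
    ν ^ 2 * ((coarseGridCorrection P A * (1 - τ • (L⁻¹ * A)) ^ ν) *ᵥ u ⬝ᵥ
      (A + h⁻¹ ^ 2 • M) *ᵥ ((coarseGridCorrection P A * (1 - τ • (L⁻¹ * A)) ^ ν) *ᵥ u)) ≤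
      (τ⁻¹ * chi * (1 + c)) ^ 2 * (u ⬝ᵥ (A + h⁻¹ ^ 2 • M) *ᵥ u) := by
  have hX : (A + h⁻¹ ^ 2 • M).PosDef := hA.add_posSemidef (hM.smul (sq_nonneg _))
  have hcoarse := dotProduct_mulVec_coarseGridCorrection_le hA hM hP hc happrox
    ((1 - τ • (L⁻¹ * A)) ^ ν *ᵥ u)
  have hsmooth := natCast_sq_mul_dotProduct_dampedSmoother_le hA.posSemidef hL hX hτ hchi hτA hLX ν u
  rw [← mulVec_mulVec] at hsmooth ⊢
  nlinarith [mul_le_mul_of_nonneg_left hcoarse (sq_nonneg (ν : ℝ)),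
    mul_le_mul_of_nonneg_left hsmooth (sq_nonneg (1 + c))]

end CoarseGrid

lemma matNorm_sq {n : ℕ} {B : Matrix (Fin n) (Fin n) ℝ} (hB : B.PosSemidef) (u : Fin n → ℝ) :
    matNorm B u ^ 2 = u ⬝ᵥ B *ᵥ u :=
  Real.sq_sqrt (by simpa using hB.dotProduct_mulVec_nonneg u)

lemma matNorm_le_mul_matNorm {n : ℕ} {B : Matrix (Fin n) (Fin n) ℝ} {x y : Fin n → ℝ} {q : ℝ}
    (hq : 0 ≤ q) (h : x ⬝ᵥ B *ᵥ x ≤ q ^ 2 * (y ⬝ᵥ B *ᵥ y)) : matNorm B x ≤ q * matNorm B y := by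
  rw [matNorm, matNorm, ← Real.sqrt_sq hq, ← Real.sqrt_mul (sq_nonneg _)]
  exact Real.sqrt_le_sqrt h

theorem statement11_general (N NH : ℕ)
    (A M L : Matrix (Fin N) (Fin N) ℝ)
    (hA : A.PosDef) (hM : M.PosDef) (hL : L.PosDef)
    (h : ℝ)
    (P : Matrix (Fin N) (Fin NH) ℝ) (hP : Function.Injective P.mulVec)
    (cA clo chi : ℝ) (hchi : 0 < chi)
    (happrox : ∀ u : Fin N → ℝ,
      matNorm M (((1 - P * (Pᵀ * A * P)⁻¹ * Pᵀ * A)).mulVec u) ^ 2 ≤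
        4 * cA ^ 2 * h ^ 2 * matNorm A u ^ 2)
    (hlow : QLE (clo • A) L)
    (hhigh : QLE L (chi • (A + h⁻¹ ^ 2 • M))) :
    ∀ τ : ℝ, 0 < τ → τ ≤ clo →
      ∀ ν : ℕ, τ⁻¹ * chi * (1 + 4 * cA ^ 2) < (ν : ℝ) →
        ∀ u : Fin N → ℝ,
          matNorm (A + h⁻¹ ^ 2 • M)
              (((1 - P * (Pᵀ * A * P)⁻¹ * Pᵀ * A) * (1 - τ • (L⁻¹ * A)) ^ ν).mulVec u) ≤
            (τ⁻¹ * chi * (1 + 4 * cA ^ 2) / ν) * matNorm (A + h⁻¹ ^ 2 • M) u := by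
  intro τ hτ hτclo ν hν u
  have hX : (A + h⁻¹ ^ 2 • M).PosDef := hA.add_posSemidef (hM.posSemidef.smul (sq_nonneg _))
  have hτA : τ • A ≤ L := by
    rw [le_iff_forall_dotProduct_mulVec_le (hA.smul hτ).isHermitian hL.isHermitian]
    intro x
    have hAx : 0 ≤ x ⬝ᵥ A *ᵥ x := by simpa using hA.posSemidef.dotProduct_mulVec_nonneg x
    have hx := hlow x
    simp only [smul_mulVec, dotProduct_smul, smul_eq_mul] at hx ⊢
    nlinarith [mul_le_mul_of_nonneg_right hτclo hAx]
  have hLX : L ≤ chi • (A + h⁻¹ ^ 2 • M) :=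
    (le_iff_forall_dotProduct_mulVec_le hL.isHermitian (hX.smul hchi).isHermitian).mpr hhigh
  have happrox' (w : Fin N → ℝ) : coarseGridCorrection P A *ᵥ w ⬝ᵥ M *ᵥ
      (coarseGridCorrection P A *ᵥ w) ≤ 4 * cA ^ 2 * h ^ 2 * (w ⬝ᵥ A *ᵥ w) := by
    have hw := happrox w
    rwa [matNorm_sq hM.posSemidef, matNorm_sq hA.posSemidef] at hw
  have hνpos : (0 : ℝ) < ν := lt_of_le_of_lt (by positivity) hν
  refine matNorm_le_mul_matNorm (by positivity) ?_
  rw [div_pow, div_mul_eq_mul_div, le_div_iff₀ (by positivity), mul_comm]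
  exact natCast_sq_mul_dotProduct_twoGrid_le hA hM.posSemidef hL hP (by positivity) happrox' hτ
    hchi hτA hLX ν u

/-- Theorem 5 of the paper, convergence of the two-grid method.
`A, M, L` are SPD, `P` has full column rank, `A_H = Pᵀ A P`, `Π_H = P A_H⁻¹ Pᵀ A` is the
`A`-orthogonal projection onto the range of `P`, the approximation property
`‖(I-Π_H)u‖²_M ≤ 4 c_A² h² ‖u‖²_A` holds, and `c̲ A ≤ L ≤ c̄ (A + h⁻² M)`.
Then for every `τ ∈ (0, c̲]` and every `ν > ν₀ := τ⁻¹ c̄ (1 + 4 c_A²)`, the two-grid error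
propagation matrix `E = (I − P A_H⁻¹ Pᵀ A)(I − τ L⁻¹ A)^ν` contracts with rate `ν₀/ν` in the
norm induced by `A + h⁻² M`. -/
theorem statement11 (N NH : ℕ)
    (A M L : Matrix (Fin N) (Fin N) ℝ)
    (hA : A.PosDef) (hM : M.PosDef) (hL : L.PosDef)
    (h : ℝ) (hh : 0 < h)
    (P : Matrix (Fin N) (Fin NH) ℝ) (hP : Function.Injective P.mulVec)
    (cA clo chi : ℝ) (hcA : 0 < cA) (hclo : 0 < clo) (hchi : 0 < chi)
    (happrox : ∀ u : Fin N → ℝ,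
      matNorm M (((1 - P * (Pᵀ * A * P)⁻¹ * Pᵀ * A)).mulVec u) ^ 2 ≤
        4 * cA ^ 2 * h ^ 2 * matNorm A u ^ 2)
    (hlow : QLE (clo • A) L)
    (hhigh : QLE L (chi • (A + h⁻¹ ^ 2 • M))) :
    ∀ τ : ℝ, 0 < τ → τ ≤ clo →
      ∀ ν : ℕ, τ⁻¹ * chi * (1 + 4 * cA ^ 2) < (ν : ℝ) →
        ∀ u : Fin N → ℝ,
          matNorm (A + h⁻¹ ^ 2 • M)
              (((1 - P * (Pᵀ * A * P)⁻¹ * Pᵀ * A) * (1 - τ • (L⁻¹ * A)) ^ ν).mulVec u) ≤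
            (τ⁻¹ * chi * (1 + 4 * cA ^ 2) / ν) * matNorm (A + h⁻¹ ^ 2 • M) u :=
  statement11_general N NH A M L hA hM hL h P hP cA clo chi hchi happrox hlow hhigh
end
end

section
/- Let A be a symmetric positive definite N×N real matrix and let {P_T : T ∈ 𝕋} be a finite family of N×n_T binary matrices of full column rank such that Σ_{T∈𝕋} P_T P_Tᵀ = I (i.e., the column index sets of the P_T partition the coordinates of ℝᴺ). Assume there is a constant C such that for each T ∈ 𝕋, the number of S ∈ 𝕋 with P_Tᵀ A P_S ≠ 0 is at most C. Then ‖u‖²_A ≤ c Σ_{T∈𝕋} ‖P_Tᵀ u‖²_{A_T} for all u ∈ ℝᴺ, where A_T := P_Tᵀ A P_T and the constant c depends only on C; equivalently, A ≤ c Σ_{T∈𝕋} P_T A_T P_Tᵀ in the sense of quadratic forms. -/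
open Matrix

/-! Writing `u = ∑_T v_T` with `v_T = P_T P_Tᵀ u`, the quantity `‖u‖²_A` is the sum of all
entries of the Gram matrix `G_{TS} = ⟨v_T, v_S⟩_A`, and `G_{TT} = ‖P_Tᵀ u‖²_{A_T}`.
`G` is positive semidefinite, so `2 G_{TS} ≤ G_{TT} + G_{SS}`, and `G_{TS}` vanishes unless
`P_Tᵀ A P_S ≠ 0`. Each row of `G` thus has at most `C` nonzero entries, and summing the
bound over them (using the symmetry of the sparsity pattern) gives `∑_{T,S} G_{TS} ≤ C tr G`;
so `c = C + 1` works (the `+ 1` only keeps `c` positive when `C = 0`). -/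

namespace Matrix

variable {ι n : Type*}

theorem PosSemidef.apply_comm {G : Matrix ι ι ℝ} (hG : G.PosSemidef) (i j : ι) :
    G j i = G i j := by
  simpa using hG.isHermitian.apply i j

variable [Fintype ι] [Fintype n]

theorem PosSemidef.two_mul_apply_le {G : Matrix ι ι ℝ} (hG : G.PosSemidef) (i j : ι) :
    2 * G i j ≤ G i i + G j j := by
  classical
  have h := hG.dotProduct_mulVec_nonneg (Pi.single i 1 - Pi.single j 1)
  simp only [star_trivial, mulVec_sub, sub_dotProduct, dotProduct_sub, mulVec_single_one,
    single_one_dotProduct, col_apply] at h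
  linarith [hG.apply_comm i j]

theorem PosSemidef.sum_apply_le_mul_trace {G : Matrix ι ι ℝ} (hG : G.PosSemidef) {C : ℕ}
    (hC : ∀ i, {j | G i j ≠ 0}.ncard ≤ C) :
    ∑ i, ∑ j, G i j ≤ C * G.trace := by
  classical
  set F : ι → Finset ι := fun i => {j | G i j ≠ 0}
  have hF : ∀ i, (F i).card ≤ C := fun i => by
    simpa [F, ← Set.ncard_coe_finset] using hC i
  have hswap : ∑ i, ∑ j ∈ F i, G j j = ∑ i, ∑ j ∈ F i, G i i :=
    Finset.sum_comm' fun i j => by simp [F, hG.apply_comm i j]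
  calc ∑ i, ∑ j, G i j = ∑ i, ∑ j ∈ F i, G i j :=
        Finset.sum_congr rfl fun i _ => (Finset.sum_filter_ne_zero _).symm
    _ ≤ ∑ i, ∑ j ∈ F i, (G i i + G j j) / 2 := by
        gcongr with i _ j _; linarith [hG.two_mul_apply_le i j]
    _ = ((∑ i, ∑ j ∈ F i, G i i) + ∑ i, ∑ j ∈ F i, G j j) / 2 := by
        rw [← Finset.sum_add_distrib, Finset.sum_div]
        exact Finset.sum_congr rfl fun i _ => by rw [← Finset.sum_add_distrib, Finset.sum_div]
    _ = ∑ i, (F i).card * G i i := by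
        rw [hswap, add_self_div_two]; simp only [Finset.sum_const, nsmul_eq_mul]
    _ ≤ ∑ i, C * G i i := by gcongr with i; exacts [hG.diag_nonneg, hF i]
    _ = C * G.trace := (Finset.mul_sum ..).symm

theorem posSemidef_of_dotProduct_mulVec {A : Matrix n n ℝ} (hA : A.PosSemidef)
    (v : ι → n → ℝ) : (of fun i j => v i ⬝ᵥ A *ᵥ v j).PosSemidef := by
  convert hA.mul_mul_conjTranspose_same (of v) using 1
  ext i j
  simp [mul_apply, dotProduct, mulVec, Finset.mul_sum, Finset.sum_mul, mul_assoc, mul_left_comm]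
  exact Finset.sum_comm

theorem PosSemidef.sum_dotProduct_mulVec_sum_le {A : Matrix n n ℝ} (hA : A.PosSemidef)
    (v : ι → n → ℝ) {C : ℕ} (hC : ∀ i, {j | v i ⬝ᵥ A *ᵥ v j ≠ 0}.ncard ≤ C) :
    (∑ i, v i) ⬝ᵥ A *ᵥ ∑ i, v i ≤ C * ∑ i, v i ⬝ᵥ A *ᵥ v i := by
  have hexpand : (∑ i, v i) ⬝ᵥ A *ᵥ ∑ i, v i = ∑ i, ∑ j, v i ⬝ᵥ A *ᵥ v j := by
    rw [mulVec_sum, sum_dotProduct]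
    simp only [dotProduct_sum]
  rw [hexpand]
  exact (posSemidef_of_dotProduct_mulVec hA v).sum_apply_le_mul_trace hC

theorem mulVec_dotProduct_mulVec_mulVec {l m : Type*} [Fintype l] [Fintype m]
    (A : Matrix n n ℝ) (P : Matrix n l ℝ) (Q : Matrix n m ℝ) (x : l → ℝ) (y : m → ℝ) :
    (P *ᵥ x) ⬝ᵥ A *ᵥ (Q *ᵥ y) = x ⬝ᵥ (Pᵀ * A * Q) *ᵥ y := by
  rw [mulVec_mulVec, dotProduct_mulVec, vecMul_mulVec, dotProduct_mulVec, ← Matrix.mul_assoc]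

end Matrix

/-- Lemma 6 of the paper.  Let `A` be SPD and `{P_T}_{T∈𝕋}` a finite
family of binary matrices of full column rank realizing a partition of the coordinates
(`∑_T P_T P_Tᵀ = I`).  If for each `T` the number of `S` with `P_Tᵀ A P_S ≠ 0` is at most `C`,
then `‖u‖²_A ≤ c ∑_T ‖P_Tᵀ u‖²_{A_T}` with `A_T = P_Tᵀ A P_T`, where `c` depends only on `C`;
equivalently `A ≤ c ∑_T P_T A_T P_Tᵀ` in the sense of quadratic forms. -/
theorem statement12 :
    ∀ C : ℕ, ∃ c : ℝ, 0 < c ∧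
      ∀ (N : ℕ) (A : Matrix (Fin N) (Fin N) ℝ), A.PosDef →
        ∀ (t : ℕ) (nT : Fin t → ℕ) (P : ∀ T : Fin t, Matrix (Fin N) (Fin (nT T)) ℝ),
          (∀ T i j, P T i j = 0 ∨ P T i j = 1) →
          (∀ T, Function.Injective (P T).mulVec) →
          (∑ T, P T * (P T)ᵀ = 1) →
          (∀ T : Fin t, {S : Fin t | (P T)ᵀ * A * P S ≠ 0}.ncard ≤ C) →
          ∀ u : Fin N → ℝ,
            u ⬝ᵥ A.mulVec u ≤
              c * ∑ T, ((P T)ᵀ.mulVec u) ⬝ᵥ ((P T)ᵀ * A * P T).mulVec ((P T)ᵀ.mulVec u) := by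
  intro C
  refine ⟨C + 1, by positivity, ?_⟩
  intro N A hA t nT P _ _ hpart hC u
  set v : Fin t → Fin N → ℝ := fun T => P T *ᵥ ((P T)ᵀ *ᵥ u)
  have hgram : ∀ T S, v T ⬝ᵥ A *ᵥ v S = (P T)ᵀ *ᵥ u ⬝ᵥ ((P T)ᵀ * A * P S) *ᵥ ((P S)ᵀ *ᵥ u) :=
    fun T S => mulVec_dotProduct_mulVec_mulVec ..
  have hu : u = ∑ T, v T := by
    simp only [v, mulVec_mulVec, ← sum_mulVec, hpart, one_mulVec]
  have hsparse : ∀ T, {S | v T ⬝ᵥ A *ᵥ v S ≠ 0}.ncard ≤ C := by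
    refine fun T => (Set.ncard_le_ncard fun S hS => ?_).trans (hC T)
    contrapose! hS
    simp only [Set.mem_ofPred_eq, not_not] at hS ⊢
    rw [hgram, hS, zero_mulVec, dotProduct_zero]
  have hdiag_nonneg : 0 ≤ ∑ T, v T ⬝ᵥ A *ᵥ v T :=
    Finset.sum_nonneg fun T _ => by simpa using hA.posSemidef.dotProduct_mulVec_nonneg (v T)
  simp only [← hgram]
  calc u ⬝ᵥ A *ᵥ u ≤ C * ∑ T, v T ⬝ᵥ A *ᵥ v T := by
        rw [hu]; exact hA.posSemidef.sum_dotProduct_mulVec_sum_le v hsparse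
    _ ≤ (C + 1) * ∑ T, v T ⬝ᵥ A *ᵥ v T := by gcongr; linarith
end
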